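/- Let f, g be real-valued C^α functions on the unit circle (0<α<1) with mean value of f equal to zero and g(1) = 0. Let T₀ be the Hilbert transform normalized to have zero mean and T₁ the Hilbert transform normalized at 1. Then ∫₀^{2π} [f·g − (T₀f)(T₁g)](e^{iθ})/(e^{iθ} − 1) dθ = 0. -/

import Mathlib

open Complex Metric intervalIntegral MeasureTheory Set Filter
open scoped NNReal Real Topology ComplexConjugate Interval

namespace Stmt7Aux


lemma emem (θ : ℝ) : Complex.exp (θ * Complex.I) ∈ sphere (0:ℂ) 1 := by
  simp [Complex.norm_exp_ofReal_mul_I]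

lemma cont_e : Continuous fun θ : ℝ => Complex.exp (θ * Complex.I) :=
  Complex.continuous_exp.comp (Complex.continuous_ofReal.mul continuous_const)

lemma mean_value {Φ : ℂ → ℂ} (h : DiffContOnCl ℂ Φ (ball (0:ℂ) 1)) :
    (∫ θ in (0:ℝ)..(2*π), Φ (Complex.exp (θ * Complex.I))) = ((2*π : ℝ) : ℂ) * Φ 0 := by
  have h0 : (0:ℂ) ∈ ball (0:ℂ) 1 := mem_ball_self one_pos
  have key := h.circleIntegral_sub_inv_smul h0
  rw [circleIntegral] at key
  simp only [deriv_circleMap, circleMap_zero, Complex.ofReal_one, one_mul, sub_zero,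
    smul_eq_mul] at key
  have heq : ∀ θ ∈ uIcc (0:ℝ) (2*π),
      Complex.exp (θ*Complex.I) * Complex.I *
        ((Complex.exp (θ*Complex.I))⁻¹ * Φ (Complex.exp (θ*Complex.I)))
      = Complex.I * Φ (Complex.exp (θ*Complex.I)) := by
    intro θ _
    have hne := Complex.exp_ne_zero (θ*Complex.I)
    field_simp
  rw [intervalIntegral.integral_congr heq, intervalIntegral.integral_const_mul] at key
  have key2 : Complex.I * ∫ θ in (0:ℝ)..(2*π), Φ (Complex.exp (θ*Complex.I))
      = Complex.I * (((2*π : ℝ) : ℂ) * Φ 0) := by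
    rw [key]; push_cast; ring
  exact mul_left_cancel₀ Complex.I_ne_zero key2



lemma norm_exp_sub_one {θ : ℝ} (h0 : 0 ≤ θ) (h2 : θ ≤ 2*π) :
    ‖Complex.exp (θ*Complex.I) - 1‖ = 2 * Real.sin (θ/2) := by
  have h1 : Complex.exp (θ*Complex.I) - 1
      = ((Real.cos θ - 1 : ℝ) : ℂ) + ((Real.sin θ : ℝ) : ℂ) * Complex.I := by
    rw [Complex.exp_mul_I, ← Complex.ofReal_cos, ← Complex.ofReal_sin]
    push_cast
    ring
  have h2' : ‖Complex.exp (θ*Complex.I) - 1‖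
      = Real.sqrt ((Real.cos θ - 1)^2 + (Real.sin θ)^2) := by
    rw [h1, Complex.norm_def, Complex.normSq_add_mul_I]
  have hc : Real.cos θ = 2 * Real.cos (θ/2)^2 - 1 := by
    have := Real.cos_two_mul (θ/2)
    rw [show 2*(θ/2) = θ by ring] at this
    linarith
  have hs : Real.sin θ = 2 * Real.sin (θ/2) * Real.cos (θ/2) := by
    have := Real.sin_two_mul (θ/2)
    rw [show 2*(θ/2) = θ by ring] at this
    linarith
  have hpy := Real.sin_sq_add_cos_sq (θ/2)
  have h3 : (Real.cos θ - 1)^2 + (Real.sin θ)^2 = (2 * Real.sin (θ/2))^2 := by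
    rw [hc, hs]; nlinarith [hpy]
  have hsn : 0 ≤ Real.sin (θ/2) :=
    Real.sin_nonneg_of_nonneg_of_le_pi (by linarith) (by linarith)
  rw [h2', h3, Real.sqrt_sq (by positivity)]

lemma low_bound {θ : ℝ} (h0 : 0 ≤ θ) (h2 : θ ≤ 2*π) :
    (2/π) * min θ (2*π - θ) ≤ ‖Complex.exp (θ*Complex.I) - 1‖ := by
  have hπ := Real.pi_pos
  rw [norm_exp_sub_one h0 h2]
  rcases le_total θ π with hθ | hθ
  · rw [min_eq_left (by linarith)]
    have := Real.mul_le_sin (x := θ/2) (by linarith) (by linarith)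
    rw [div_mul_eq_mul_div, div_le_iff₀ hπ] at this ⊢
    linarith
  · rw [min_eq_right (by linarith)]
    have key := Real.mul_le_sin (x := π - θ/2) (by linarith) (by linarith)
    rw [Real.sin_pi_sub] at key
    rw [div_mul_eq_mul_div, div_le_iff₀ hπ] at key ⊢
    linarith

lemma exp_ne_one {θ : ℝ} (h0 : 0 < θ) (h2 : θ < 2*π) : Complex.exp (θ*Complex.I) ≠ 1 := by
  intro h
  rw [Complex.exp_eq_one_iff] at h
  obtain ⟨n, hn⟩ := h
  have hn' : (θ : ℂ) * Complex.I = ((n : ℝ) * (2*π) : ℝ) * Complex.I := by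
    rw [hn]; push_cast; ring
  have hθ : θ = (n : ℝ) * (2*π) := by
    have := mul_right_cancel₀ Complex.I_ne_zero hn'
    exact_mod_cast this
  have hπ := Real.pi_pos
  have hn0 : (0:ℝ) < (n:ℝ) := by nlinarith
  have hn1 : (n:ℝ) < 1 := by nlinarith
  have : (0:ℤ) < n := by exact_mod_cast hn0
  have : n < 1 := by exact_mod_cast hn1
  omega

lemma bound_int {c : ℝ} (hc1 : -1 < c) (hc0 : c < 0) :
    IntervalIntegrable (fun θ : ℝ => ((2/π) * min θ (2*π - θ)) ^ c) MeasureTheory.volume 0 (2*π) := by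
  have hπ := Real.pi_pos
  have base : IntervalIntegrable (fun x : ℝ => x ^ c) MeasureTheory.volume 0 π :=
    intervalIntegrable_rpow' hc1
  have base2 : IntervalIntegrable (fun x : ℝ => (2/π)^c * x ^ c) MeasureTheory.volume 0 π :=
    base.const_mul _
  have piece1 : IntervalIntegrable (fun θ : ℝ => ((2/π) * min θ (2*π - θ)) ^ c)
      MeasureTheory.volume 0 π := by
    rw [intervalIntegrable_iff] at base2 ⊢
    rw [uIoc_of_le (le_of_lt hπ)] at base2 ⊢
    refine base2.congr_fun ?_ measurableSet_Ioc
    intro θ hθ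
    have hm : min θ (2*π - θ) = θ := min_eq_left (by linarith [hθ.2])
    simp only [hm]
    rw [Real.mul_rpow (by positivity) (le_of_lt hθ.1)]
  have base3 : IntervalIntegrable (fun θ : ℝ => (2/π)^c * (2*π - θ) ^ c)
      MeasureTheory.volume π (2*π) := by
    have := base2.comp_sub_left (2*π)
    simpa [show 2*π - π = π by ring, show 2*π - 0 = 2*π by ring] using this.symm
  have piece2 : IntervalIntegrable (fun θ : ℝ => ((2/π) * min θ (2*π - θ)) ^ c)
      MeasureTheory.volume π (2*π) := by
    rw [intervalIntegrable_iff] at base3 ⊢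
    rw [uIoc_of_le (by linarith)] at base3 ⊢
    refine base3.congr_fun ?_ measurableSet_Ioc
    intro θ hθ
    have hm : min θ (2*π - θ) = 2*π - θ := min_eq_right (by linarith [hθ.1])
    simp only [hm]
    rw [Real.mul_rpow (by positivity) (by linarith [hθ.2] : (0:ℝ) ≤ 2*π - θ)]
  exact piece1.trans piece2




lemma rot_bound {Φ : ℂ → ℂ} (h : DiffContOnCl ℂ Φ (ball (0:ℂ) 1)) {B : ℝ} {e : ℂ}
    (he : e ∈ sphere (0:ℂ) 1)
    (hb : ∀ z ∈ sphere (0:ℂ) 1, ‖Φ (z * e) - Φ z‖ ≤ B) {w : ℂ}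
    (hw : w ∈ closedBall (0:ℂ) 1) :
    ‖Φ (w * e) - Φ w‖ ≤ B := by
  have hΦc : ContinuousOn Φ (closedBall (0:ℂ) 1) := by
    have := h.continuousOn; rwa [closure_ball (0:ℂ) one_ne_zero] at this
  have hen : ‖e‖ = 1 := mem_sphere_zero_iff_norm.1 he
  have hcomp : DiffContOnCl ℂ (fun z => Φ (z * e)) (ball (0:ℂ) 1) := by
    constructor
    · refine h.differentiableOn.comp ((differentiable_id.mul_const e).differentiableOn) ?_
      intro z hz
      simp only [mem_ball_zero_iff] at hz ⊢
      rwa [norm_mul, hen, mul_one]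
    · rw [closure_ball (0:ℂ) one_ne_zero]
      refine hΦc.comp ((continuous_id.mul continuous_const).continuousOn) ?_
      intro z hz
      simp only [mem_closedBall_zero_iff] at hz ⊢
      rwa [norm_mul, hen, mul_one]
  have hd : DiffContOnCl ℂ (fun z => Φ (z * e) - Φ z) (ball (0:ℂ) 1) := hcomp.sub h
  refine Complex.norm_le_of_forall_mem_frontier_norm_le isBounded_ball hd ?_ ?_
  · rw [frontier_ball (0:ℂ) one_ne_zero]
    exact hb
  · rwa [closure_ball (0:ℂ) one_ne_zero]

lemma ae_ne_two_pi : ∀ᵐ θ : ℝ, θ ≠ 2*π := by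
  have h : MeasureTheory.volume ({2*π} : Set ℝ) = 0 := measure_singleton _
  rw [MeasureTheory.ae_iff]
  simpa [Classical.not_not] using h

lemma cauchy_step {Φ : ℂ → ℂ} (h : DiffContOnCl ℂ Φ (ball (0:ℂ) 1)) {ρ : ℝ}
    (h0 : 0 < ρ) (h1 : ρ < 1) :
    (∫ θ in (0:ℝ)..(2*π),
        (Φ ((ρ:ℂ) * Complex.exp (θ*Complex.I)) - Φ (ρ:ℂ)) / (Complex.exp (θ*Complex.I) - 1))
      = ((2*π : ℝ) : ℂ) * (Φ (ρ:ℂ) - Φ 0) := by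
  set Ψ : ℂ → ℂ := dslope (fun w => Φ ((ρ:ℂ) * w)) 1 with hΨdef
  have hρinv : (1:ℝ) < ρ⁻¹ := one_lt_inv₀ h0 |>.2 h1
  have h1mem : (1:ℂ) ∈ ball (0:ℂ) ρ⁻¹ := by
    simp only [mem_ball_zero_iff, norm_one]
    exact_mod_cast hρinv
  have hball : ball (0:ℂ) ρ⁻¹ ∈ 𝓝 (1:ℂ) := isOpen_ball.mem_nhds h1mem
  have hdiff : DifferentiableOn ℂ (fun w => Φ ((ρ:ℂ)*w)) (ball (0:ℂ) ρ⁻¹) := by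
    refine h.differentiableOn.comp ((differentiable_const _).mul differentiable_id).differentiableOn ?_
    intro w hw
    simp only [mem_ball_zero_iff] at hw ⊢
    rw [norm_mul, Complex.norm_real, Real.norm_eq_abs, abs_of_pos h0]
    calc ρ * ‖w‖ < ρ * ρ⁻¹ := by
          exact mul_lt_mul_of_pos_left hw h0
      _ = 1 := mul_inv_cancel₀ (ne_of_gt h0)
  have hΨdiff : DifferentiableOn ℂ Ψ (ball (0:ℂ) ρ⁻¹) := (differentiableOn_dslope hball).mpr hdiff
  have hΨdc : DiffContOnCl ℂ Ψ (ball (0:ℂ) 1) := by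
    constructor
    · exact hΨdiff.mono (ball_subset_ball (le_of_lt hρinv))
    · rw [closure_ball (0:ℂ) one_ne_zero]
      exact hΨdiff.continuousOn.mono (closedBall_subset_ball hρinv)
  have hmv := mean_value hΨdc
  have hΨ0 : Ψ 0 = Φ (ρ:ℂ) - Φ 0 := by
    rw [hΨdef, dslope_of_ne _ (by norm_num : (0:ℂ) ≠ 1), slope_def_field]
    simp [mul_zero, mul_one]
    ring
  have hcongr : ∀ᵐ θ : ℝ, θ ∈ Ι (0:ℝ) (2*π) →
      (Φ ((ρ:ℂ) * Complex.exp (θ*Complex.I)) - Φ (ρ:ℂ)) / (Complex.exp (θ*Complex.I) - 1)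
        = Ψ (Complex.exp (θ*Complex.I)) := by
    filter_upwards [ae_ne_two_pi] with θ hθ2 hθI
    rw [uIoc_of_le (by positivity : (0:ℝ) ≤ 2*π)] at hθI
    have hne1 : Complex.exp (θ*Complex.I) ≠ 1 :=
      exp_ne_one hθI.1 (lt_of_le_of_ne hθI.2 hθ2)
    rw [hΨdef, dslope_of_ne _ hne1, slope_def_field]
    rw [mul_one]
  rw [intervalIntegral.integral_congr_ae hcongr, hmv, hΨ0]

lemma key_identity {Φ : ℂ → ℂ} (h : DiffContOnCl ℂ Φ (ball (0:ℂ) 1))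
    {α L : ℝ} (hα0 : 0 < α) (hα1 : α < 1) (hL : 0 ≤ L)
    (hHold : ∀ σ ∈ sphere (0:ℂ) 1, ∀ τ ∈ sphere (0:ℂ) 1, ‖Φ σ - Φ τ‖ ≤ L * ‖σ - τ‖ ^ α)
    (h1 : Φ 1 = 0) :
    IntervalIntegrable
      (fun θ => Φ (Complex.exp (θ*Complex.I)) / (Complex.exp (θ*Complex.I) - 1))
      MeasureTheory.volume 0 (2*π)
    ∧ (∫ θ in (0:ℝ)..(2*π), Φ (Complex.exp (θ*Complex.I)) / (Complex.exp (θ*Complex.I) - 1))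
      = -(((2*π : ℝ):ℂ) * Φ 0) := by
  have hπ := Real.pi_pos
  have hΦc : ContinuousOn Φ (closedBall (0:ℂ) 1) := by
    have := h.continuousOn; rwa [closure_ball (0:ℂ) one_ne_zero] at this
  set m : ℝ → ℝ := fun θ => L * ((2/π) * min θ (2*π - θ)) ^ (α-1) with hm
  have m_int : IntervalIntegrable m MeasureTheory.volume 0 (2*π) :=
    (bound_int (by linarith) (by linarith)).const_mul L
  have hIoc : Ι (0:ℝ) (2*π) = Ioc 0 (2*π) := uIoc_of_le (by positivity)
  have h1s : (1:ℂ) ∈ sphere (0:ℂ) 1 := by simp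
  -- the chain bound
  have chain : ∀ θ ∈ Ioc (0:ℝ) (2*π), ∀ x : ℂ,
      ‖x‖ ≤ L * ‖Complex.exp (θ*Complex.I) - 1‖ ^ α →
      ‖x / (Complex.exp (θ*Complex.I) - 1)‖ ≤ m θ := by
    intro θ hθ x hx
    rcases eq_or_lt_of_le hθ.2 with h2eq | h2lt
    · subst h2eq
      have hE1 : Complex.exp (((2*π:ℝ):ℂ)*Complex.I) = 1 := by
        push_cast
        exact Complex.exp_two_pi_mul_I
      rw [hE1, sub_self, div_zero, norm_zero, hm]
      have hmin : min (2*π) (2*π - 2*π) = 0 := by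
        rw [min_eq_right (by linarith)]; ring
      simp only [hmin, mul_zero]
      rw [Real.zero_rpow (by linarith : α - 1 ≠ 0), mul_zero]
    · have hne1 : Complex.exp (θ*Complex.I) ≠ 1 := exp_ne_one hθ.1 h2lt
      have hden : (0:ℝ) < ‖Complex.exp (θ*Complex.I) - 1‖ :=
        norm_pos_iff.2 (sub_ne_zero.2 hne1)
      have hminpos : 0 < (2/π) * min θ (2*π - θ) := by
        have : 0 < min θ (2*π - θ) := lt_min hθ.1 (by linarith)
        positivity
      rw [norm_div]
      calc ‖x‖ / ‖Complex.exp (θ*Complex.I) - 1‖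
          ≤ (L * ‖Complex.exp (θ*Complex.I) - 1‖ ^ α) / ‖Complex.exp (θ*Complex.I) - 1‖ := by
            gcongr
        _ = L * ‖Complex.exp (θ*Complex.I) - 1‖ ^ (α-1) := by
            rw [Real.rpow_sub hden, Real.rpow_one]; ring
        _ ≤ m θ := by
            rw [hm]
            have hmono := Real.rpow_le_rpow_of_nonpos hminpos (low_bound hθ.1.le hθ.2)
              (by linarith : α - 1 ≤ 0)
            exact mul_le_mul_of_nonneg_left hmono hL
  -- measurability helper
  have meas_helper : ∀ N : ℝ → ℂ, Continuous N →
      AEStronglyMeasurable (fun θ => N θ / (Complex.exp (θ*Complex.I) - 1))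
        (MeasureTheory.volume.restrict (Ι (0:ℝ) (2*π))) := by
    intro N hN
    rw [hIoc, ← Measure.restrict_congr_set Ioo_ae_eq_Ioc]
    refine ContinuousOn.aestronglyMeasurable ?_ measurableSet_Ioo
    refine ContinuousOn.div hN.continuousOn
      ((cont_e.sub continuous_const).continuousOn) ?_
    intro θ hθ
    exact sub_ne_zero.2 (exp_ne_one hθ.1 hθ.2)
  -- composed continuity
  have cont_comp : ∀ z : ℂ, ‖z‖ ≤ 1 →
      Continuous fun θ : ℝ => Φ (z * Complex.exp (θ*Complex.I)) := by
    intro z hz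
    refine hΦc.comp_continuous (continuous_const.mul cont_e) ?_
    intro θ
    simp only [mem_closedBall_zero_iff, norm_mul]
    rw [mem_sphere_zero_iff_norm.1 (emem θ), mul_one]
    exact hz
  have contP_num : Continuous fun θ : ℝ => Φ (Complex.exp (θ*Complex.I)) := by
    have := cont_comp 1 (by norm_num)
    simpa using this
  -- integrability of the target integrand
  have hPbound : ∀ θ ∈ Ioc (0:ℝ) (2*π),
      ‖Φ (Complex.exp (θ*Complex.I)) / (Complex.exp (θ*Complex.I) - 1)‖ ≤ m θ := by
    intro θ hθ
    refine chain θ hθ _ ?_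
    have := hHold _ (emem θ) 1 h1s
    rwa [h1, sub_zero] at this
  have hPint : IntervalIntegrable
      (fun θ => Φ (Complex.exp (θ*Complex.I)) / (Complex.exp (θ*Complex.I) - 1))
      MeasureTheory.volume 0 (2*π) := by
    rw [intervalIntegrable_iff]
    have hm' := m_int
    rw [intervalIntegrable_iff] at hm'
    refine hm'.mono' (meas_helper _ contP_num) ?_
    rw [hIoc]
    exact (ae_restrict_iff' measurableSet_Ioc).2 (ae_of_all _ hPbound)
  refine ⟨hPint, ?_⟩
  have hev : Ioo (0:ℝ) 1 ∈ 𝓝[<] (1:ℝ) :=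
    Ioo_mem_nhdsLT_of_mem (by constructor <;> norm_num)
  -- general radial limit
  have tends_gen : ∀ w : ℂ, w ∈ sphere (0:ℂ) 1 →
      Tendsto (fun ρ : ℝ => Φ ((ρ:ℂ) * w)) (𝓝[<] (1:ℝ)) (𝓝 (Φ w)) := by
    intro w hw
    have hwc : w ∈ closedBall (0:ℂ) 1 := sphere_subset_closedBall hw
    have hcw : ContinuousWithinAt Φ (closedBall (0:ℂ) 1) w := hΦc w hwc
    refine hcw.tendsto.comp ?_
    apply tendsto_nhdsWithin_of_tendsto_nhds_of_eventually_within
    · have ht : Tendsto (fun ρ : ℝ => (ρ:ℂ)*w) (𝓝 1) (𝓝 (((1:ℝ):ℂ) * w)) :=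
        (Complex.continuous_ofReal.tendsto 1).mul_const w
      simpa using ht.mono_left nhdsWithin_le_nhds
    · filter_upwards [hev] with ρ hρ
      simp only [mem_closedBall_zero_iff, norm_mul, Complex.norm_real, Real.norm_eq_abs,
        abs_of_pos hρ.1, mem_sphere_zero_iff_norm.1 hw, mul_one]
      exact hρ.2.le
  -- DCT data
  have hFρmeas : ∀ᶠ ρ : ℝ in 𝓝[<] (1:ℝ), AEStronglyMeasurable
      (fun θ : ℝ => (Φ ((ρ:ℂ)*Complex.exp (θ*Complex.I)) - Φ (ρ:ℂ)) /
        (Complex.exp (θ*Complex.I) - 1))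
      (MeasureTheory.volume.restrict (Ι (0:ℝ) (2*π))) := by
    filter_upwards [hev] with ρ hρ
    have hρn : ‖(ρ:ℂ)‖ ≤ 1 := by
      rw [Complex.norm_real, Real.norm_eq_abs, abs_of_pos hρ.1]; exact hρ.2.le
    exact meas_helper _ ((cont_comp _ hρn).sub continuous_const)
  have hFρbound : ∀ᶠ ρ : ℝ in 𝓝[<] (1:ℝ), ∀ᵐ θ : ℝ ∂MeasureTheory.volume,
      θ ∈ Ι (0:ℝ) (2*π) →
      ‖(Φ ((ρ:ℂ)*Complex.exp (θ*Complex.I)) - Φ (ρ:ℂ)) /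
        (Complex.exp (θ*Complex.I) - 1)‖ ≤ m θ := by
    filter_upwards [hev] with ρ hρ
    refine ae_of_all _ ?_
    intro θ hθI
    rw [hIoc] at hθI
    refine chain θ hθI _ ?_
    refine rot_bound h (emem θ) ?_ ?_
    · intro z hz
      have hz1 : ‖z‖ = 1 := mem_sphere_zero_iff_norm.1 hz
      have hzs : z * Complex.exp (θ*Complex.I) ∈ sphere (0:ℂ) 1 := by
        rw [mem_sphere_zero_iff_norm, norm_mul, hz1, one_mul]
        exact mem_sphere_zero_iff_norm.1 (emem θ)
      have hh := hHold _ hzs z hz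
      calc ‖Φ (z*Complex.exp (θ*Complex.I)) - Φ z‖
          ≤ L * ‖z*Complex.exp (θ*Complex.I) - z‖^α := hh
        _ = L * ‖Complex.exp (θ*Complex.I) - 1‖^α := by
            rw [show z*Complex.exp (θ*Complex.I) - z = z*(Complex.exp (θ*Complex.I)-1) by ring,
              norm_mul, hz1, one_mul]
    · simp only [mem_closedBall_zero_iff, Complex.norm_real, Real.norm_eq_abs,
        abs_of_pos hρ.1]
      exact hρ.2.le
  have hFρlim : ∀ᵐ θ : ℝ ∂MeasureTheory.volume, θ ∈ Ι (0:ℝ) (2*π) →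
      Tendsto (fun ρ : ℝ => (Φ ((ρ:ℂ)*Complex.exp (θ*Complex.I)) - Φ (ρ:ℂ)) /
          (Complex.exp (θ*Complex.I) - 1)) (𝓝[<] (1:ℝ))
        (𝓝 (Φ (Complex.exp (θ*Complex.I)) / (Complex.exp (θ*Complex.I) - 1))) := by
    filter_upwards [ae_ne_two_pi] with θ hθ2 hθI
    rw [hIoc] at hθI
    have t1 := tends_gen _ (emem θ)
    have t2 : Tendsto (fun ρ : ℝ => Φ ((ρ:ℂ))) (𝓝[<] (1:ℝ)) (𝓝 (Φ 1)) := by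
      have := tends_gen 1 h1s
      simpa using this
    have := (t1.sub t2).div_const (Complex.exp (θ*Complex.I) - 1)
    rwa [h1, sub_zero] at this
  have hDCT := intervalIntegral.tendsto_integral_filter_of_dominated_convergence
    (F := fun (ρ : ℝ) (θ : ℝ) => (Φ ((ρ:ℂ)*Complex.exp (θ*Complex.I)) - Φ (ρ:ℂ)) /
        (Complex.exp (θ*Complex.I) - 1))
    (f := fun θ : ℝ => Φ (Complex.exp (θ*Complex.I)) / (Complex.exp (θ*Complex.I) - 1))
    m hFρmeas hFρbound m_int hFρlim
  have hcauchy : (fun ρ : ℝ => ∫ θ in (0:ℝ)..(2*π),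
        (Φ ((ρ:ℂ)*Complex.exp (θ*Complex.I)) - Φ (ρ:ℂ)) / (Complex.exp (θ*Complex.I) - 1))
      =ᶠ[𝓝[<] (1:ℝ)] (fun ρ : ℝ => ((2*π : ℝ) : ℂ) * (Φ (ρ:ℂ) - Φ 0)) := by
    filter_upwards [hev] with ρ hρ
    exact cauchy_step h hρ.1 hρ.2
  have hlim2 : Tendsto (fun ρ : ℝ => ((2*π : ℝ) : ℂ) * (Φ (ρ:ℂ) - Φ 0)) (𝓝[<] (1:ℝ))
      (𝓝 (((2*π : ℝ) : ℂ) * (Φ 1 - Φ 0))) := by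
    have t2 : Tendsto (fun ρ : ℝ => Φ ((ρ:ℂ))) (𝓝[<] (1:ℝ)) (𝓝 (Φ 1)) := by
      have := tends_gen 1 h1s
      simpa using this
    exact tendsto_const_nhds.mul (t2.sub tendsto_const_nhds)
  have hval := tendsto_nhds_unique (hDCT.congr' hcauchy) hlim2
  rw [hval, h1, zero_sub]
  ring


lemma holder_dist_le {X Y : Type*} [PseudoMetricSpace X] [PseudoMetricSpace Y]
    {C r : ℝ≥0} {f : X → Y} {s : Set X}
    (h : HolderOnWith C r f s) {x y : X} (hx : x ∈ s) (hy : y ∈ s) :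
    dist (f x) (f y) ≤ (C:ℝ) * dist x y ^ (r : ℝ) := by
  have he := h.edist_le hx hy
  rw [edist_dist, edist_dist] at he
  have hd : (ENNReal.ofReal (dist x y)) ^ (r:ℝ) = ENNReal.ofReal (dist x y ^ (r:ℝ)) := by
    rw [← ENNReal.ofReal_rpow_of_nonneg dist_nonneg r.coe_nonneg]
  rw [hd] at he
  have hle : ENNReal.ofReal (dist (f x) (f y))
      ≤ ENNReal.ofReal ((C:ℝ) * dist x y ^ (r:ℝ)) := by
    rw [ENNReal.ofReal_mul (by positivity)] at *
    convert he using 2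
    simp [ENNReal.ofReal_coe_nnreal]
  have := (ENNReal.ofReal_le_ofReal_iff (by positivity)).1 hle
  exact this


lemma circle_pt (σ : ℂ) (a b c d : ℝ) (hσ : σ ≠ 0)
    (hconjσ : (starRingEnd ℂ) σ = σ⁻¹) (hd : σ - 1 ≠ 0) (hi : σ⁻¹ - 1 ≠ 0) :
    ((a * c - b * d : ℝ) : ℂ) / (σ - 1)
    = (1/2:ℂ) * (((a:ℂ) + Complex.I*(b:ℂ)) * ((c:ℂ) + Complex.I*(d:ℂ)) / (σ - 1))
      + (1/2:ℂ) * (starRingEnd ℂ) (-(((a:ℂ) + Complex.I*(b:ℂ)) * ((c:ℂ) + Complex.I*(d:ℂ)))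
          - ((a:ℂ) + Complex.I*(b:ℂ)) * ((c:ℂ) + Complex.I*(d:ℂ)) / (σ - 1)) := by
  set V : ℂ := ((a:ℂ) + Complex.I*(b:ℂ)) * ((c:ℂ) + Complex.I*(d:ℂ)) with hV
  set W : ℂ := ((a:ℂ) - Complex.I*(b:ℂ)) * ((c:ℂ) - Complex.I*(d:ℂ)) with hW
  have hconjV : (starRingEnd ℂ) V = W := by
    rw [hV, hW, map_mul, map_add, map_add, map_mul, map_mul, Complex.conj_I,
      Complex.conj_ofReal, Complex.conj_ofReal, Complex.conj_ofReal, Complex.conj_ofReal]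
    ring
  have hVW : V + W = 2 * ((a*c - b*d : ℝ):ℂ) := by
    rw [hV, hW]; push_cast
    linear_combination (2*(b:ℂ)*(d:ℂ)) * Complex.I_sq
  rw [map_sub, map_neg, map_div₀, map_sub, map_one, hconjσ, hconjV]
  have h1σ : (1:ℂ) - σ ≠ 0 := fun hc => hd (by
    have : σ = 1 := by linear_combination -hc
    rw [this]; ring)
  have e3 : W / (σ⁻¹ - 1) = W * σ / (1 - σ) := by
    rw [show σ⁻¹ - 1 = (1-σ)/σ by field_simp, div_div_eq_mul_div]
  have e4 : -W - W*σ/(1-σ) = W/(σ-1) := by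
    field_simp
    ring
  rw [e3, e4]
  field_simp
  push_cast
  linear_combination (-2*(b:ℂ)*(d:ℂ)) * Complex.I_sq

end Stmt7Aux
open Stmt7Aux

/-- for real Hölder `f, g` on the unit circle with `f` of zero mean and
`g(1) = 0`, writing `f₀ = T₀f` (zero-mean Hilbert transform) and `g₁ = T₁g` (Hilbert
transform normalized at `1`), one has `∫₀^{2π} [fg − (T₀f)(T₁g)](σ)/(σ−1) dθ = 0`. -/
theorem stmt_7 (α : ℝ≥0) (hα0 : 0 < α) (hα1 : (α : ℝ) < 1)
    (f g f₀ g₁ : ℂ → ℝ)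
    (hf : ∃ C, HolderOnWith C α f (sphere (0:ℂ) 1))
    (hg : ∃ C, HolderOnWith C α g (sphere (0:ℂ) 1))
    (hf₀ : ∃ C, HolderOnWith C α f₀ (sphere (0:ℂ) 1))
    (hg₁ : ∃ C, HolderOnWith C α g₁ (sphere (0:ℂ) 1))
    (hfmean : (∫ θ in (0:ℝ)..(2 * π), f (Complex.exp (θ * Complex.I))) = 0)
    (hg1 : g 1 = 0)
    (hf₀mean : (∫ θ in (0:ℝ)..(2 * π), f₀ (Complex.exp (θ * Complex.I))) = 0)
    (hf₀ext : ∃ F : ℂ → ℂ, ContinuousOn F (closedBall 0 1) ∧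
      DifferentiableOn ℂ F (ball 0 1) ∧
      ∀ σ ∈ sphere (0:ℂ) 1, F σ = (f σ : ℂ) + Complex.I * (f₀ σ : ℂ))
    (hg₁1 : g₁ 1 = 0)
    (hg₁ext : ∃ F : ℂ → ℂ, ContinuousOn F (closedBall 0 1) ∧
      DifferentiableOn ℂ F (ball 0 1) ∧
      ∀ σ ∈ sphere (0:ℂ) 1, F σ = (g σ : ℂ) + Complex.I * (g₁ σ : ℂ)) :
    (∫ θ in (0:ℝ)..(2 * π),
      ((f (Complex.exp (θ * Complex.I)) * g (Complex.exp (θ * Complex.I))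
        - f₀ (Complex.exp (θ * Complex.I)) * g₁ (Complex.exp (θ * Complex.I)) : ℝ) : ℂ) /
        (Complex.exp (θ * Complex.I) - 1)) = 0 := by
  obtain ⟨F, hFc, hFd, hFσ⟩ := hf₀ext
  obtain ⟨G, hGc, hGd, hGσ⟩ := hg₁ext
  obtain ⟨CF, hCF⟩ := hf
  obtain ⟨CG, hCG⟩ := hg
  obtain ⟨CF0, hCF0⟩ := hf₀
  obtain ⟨CG1, hCG1⟩ := hg₁
  have hπ := Real.pi_pos
  have h1s : (1:ℂ) ∈ sphere (0:ℂ) 1 := by simp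
  have hα0' : (0:ℝ) < (α:ℝ) := by exact_mod_cast hα0
  -- Hölder property of F and G on the sphere
  have holder_pair : ∀ (H : ℂ → ℂ) (u v : ℂ → ℝ) (Cu Cv : ℝ≥0),
      HolderOnWith Cu α u (sphere (0:ℂ) 1) → HolderOnWith Cv α v (sphere (0:ℂ) 1) →
      (∀ σ ∈ sphere (0:ℂ) 1, H σ = (u σ : ℂ) + Complex.I * (v σ : ℂ)) →
      ∀ σ ∈ sphere (0:ℂ) 1, ∀ τ ∈ sphere (0:ℂ) 1,
        ‖H σ - H τ‖ ≤ ((Cu:ℝ) + (Cv:ℝ)) * ‖σ - τ‖ ^ (α:ℝ) := by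
    intro H u v Cu Cv hu hv hH σ hσ τ hτ
    rw [hH σ hσ, hH τ hτ]
    have e1 : (u σ : ℂ) + Complex.I*(v σ : ℂ) - ((u τ : ℂ) + Complex.I*(v τ : ℂ))
        = ((u σ - u τ : ℝ) : ℂ) + Complex.I * ((v σ - v τ : ℝ):ℂ) := by push_cast; ring
    rw [e1]
    calc ‖((u σ - u τ : ℝ) : ℂ) + Complex.I * ((v σ - v τ : ℝ):ℂ)‖
        ≤ ‖((u σ - u τ : ℝ) : ℂ)‖ + ‖Complex.I * ((v σ - v τ : ℝ):ℂ)‖ := norm_add_le _ _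
      _ = dist (u σ) (u τ) + dist (v σ) (v τ) := by
          rw [norm_mul, Complex.norm_I, one_mul, Complex.norm_real, Complex.norm_real,
            Real.norm_eq_abs, Real.norm_eq_abs, Real.dist_eq, Real.dist_eq]
      _ ≤ (Cu:ℝ) * dist σ τ ^ (α:ℝ) + (Cv:ℝ) * dist σ τ ^ (α:ℝ) :=
          add_le_add (holder_dist_le hu hσ hτ) (holder_dist_le hv hσ hτ)
      _ = ((Cu:ℝ) + (Cv:ℝ)) * ‖σ - τ‖ ^ (α:ℝ) := by rw [dist_eq_norm]; ring
  have holderF := holder_pair F f f₀ CF CF0 hCF hCF0 hFσ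
  have holderG := holder_pair G g g₁ CG CG1 hCG hCG1 hGσ
  -- bounds on the sphere
  obtain ⟨MF, hMF⟩ := (isCompact_sphere (0:ℂ) 1).exists_bound_of_continuousOn
    (hFc.mono sphere_subset_closedBall)
  obtain ⟨MG, hMG⟩ := (isCompact_sphere (0:ℂ) 1).exists_bound_of_continuousOn
    (hGc.mono sphere_subset_closedBall)
  set L : ℝ := max MF 0 * ((CG:ℝ) + (CG1:ℝ)) + max MG 0 * ((CF:ℝ) + (CF0:ℝ)) with hLdef
  have hL : 0 ≤ L := by positivity
  set Φ : ℂ → ℂ := fun z => F z * G z with hΦdef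
  have hΦdc : DiffContOnCl ℂ Φ (ball (0:ℂ) 1) := by
    constructor
    · exact hFd.mul hGd
    · rw [closure_ball (0:ℂ) one_ne_zero]; exact hFc.mul hGc
  have hΦHold : ∀ σ ∈ sphere (0:ℂ) 1, ∀ τ ∈ sphere (0:ℂ) 1,
      ‖Φ σ - Φ τ‖ ≤ L * ‖σ - τ‖ ^ (α:ℝ) := by
    intro σ hσ τ hτ
    have key : Φ σ - Φ τ = F σ * (G σ - G τ) + (F σ - F τ) * G τ := by
      simp only [hΦdef]; ring
    have hbF : ‖F σ‖ ≤ max MF 0 := le_trans (hMF σ hσ) (le_max_left _ _)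
    have hbG : ‖G τ‖ ≤ max MG 0 := le_trans (hMG τ hτ) (le_max_left _ _)
    calc ‖Φ σ - Φ τ‖ ≤ ‖F σ‖ * ‖G σ - G τ‖ + ‖F σ - F τ‖ * ‖G τ‖ := by
          rw [key]
          refine (norm_add_le _ _).trans ?_
          rw [norm_mul, norm_mul]
      _ ≤ max MF 0 * (((CG:ℝ) + (CG1:ℝ)) * ‖σ-τ‖^(α:ℝ))
          + (((CF:ℝ) + (CF0:ℝ)) * ‖σ-τ‖^(α:ℝ)) * max MG 0 := by
          gcongr
          · exact holderG σ hσ τ hτ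
          · exact holderF σ hσ τ hτ
      _ = L * ‖σ - τ‖ ^ (α:ℝ) := by rw [hLdef]; ring
  -- Φ vanishes at 1
  have hG1 : G 1 = 0 := by
    rw [hGσ 1 h1s, hg1, hg₁1]; simp
  have hΦ1 : Φ 1 = 0 := by simp only [hΦdef]; rw [hG1, mul_zero]
  -- F vanishes at 0
  have hcontf : Continuous fun θ:ℝ => f (Complex.exp (θ*Complex.I)) :=
    (hCF.continuousOn hα0).comp_continuous cont_e (fun θ => emem θ)
  have hcontf₀ : Continuous fun θ:ℝ => f₀ (Complex.exp (θ*Complex.I)) :=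
    (hCF0.continuousOn hα0).comp_continuous cont_e (fun θ => emem θ)
  have hF0 : F 0 = 0 := by
    have hFdc : DiffContOnCl ℂ F (ball (0:ℂ) 1) := by
      constructor
      · exact hFd
      · rw [closure_ball (0:ℂ) one_ne_zero]; exact hFc
    have hmv := mean_value hFdc
    have hcongr : Set.EqOn (fun θ:ℝ => F (Complex.exp (θ*Complex.I)))
        (fun θ:ℝ => ((f (Complex.exp (θ*Complex.I)) : ℝ):ℂ)
          + Complex.I * ((f₀ (Complex.exp (θ*Complex.I)):ℝ):ℂ)) (Set.uIcc 0 (2*π)) :=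
      fun θ _ => hFσ _ (emem θ)
    rw [intervalIntegral.integral_congr hcongr] at hmv
    have hif : IntervalIntegrable (fun θ:ℝ => ((f (Complex.exp (θ*Complex.I)) : ℝ):ℂ))
        MeasureTheory.volume 0 (2*π) :=
      (Complex.continuous_ofReal.comp hcontf).intervalIntegrable _ _
    have hif₀ : IntervalIntegrable
        (fun θ:ℝ => Complex.I * ((f₀ (Complex.exp (θ*Complex.I)) : ℝ):ℂ))
        MeasureTheory.volume 0 (2*π) :=
      (continuous_const.mul (Complex.continuous_ofReal.comp hcontf₀)).intervalIntegrable _ _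
    rw [intervalIntegral.integral_add hif hif₀, intervalIntegral.integral_const_mul,
      intervalIntegral.integral_ofReal, intervalIntegral.integral_ofReal,
      hfmean, hf₀mean] at hmv
    have h2πne : ((2*π:ℝ):ℂ) ≠ 0 := by
      simp only [ne_eq, Complex.ofReal_eq_zero]
      positivity
    have hz : ((2*π:ℝ):ℂ) * F 0 = 0 := by rw [← hmv]; simp
    exact (mul_eq_zero.1 hz).resolve_left h2πne
  have hΦ0 : Φ 0 = 0 := by simp only [hΦdef]; rw [hF0, zero_mul]
  -- apply the two integral identities
  obtain ⟨hPint, hPval⟩ := key_identity hΦdc hα0' hα1 hL hΦHold hΦ1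
  rw [hΦ0, mul_zero, neg_zero] at hPval
  have hmean := mean_value hΦdc
  rw [hΦ0, mul_zero] at hmean
  -- continuity and integrability of Φ along the circle
  have hΦcont : ContinuousOn Φ (closedBall (0:ℂ) 1) := by
    have := hΦdc.continuousOn; rwa [closure_ball (0:ℂ) one_ne_zero] at this
  have hΦEcont : Continuous fun θ:ℝ => Φ (Complex.exp (θ*Complex.I)) :=
    hΦcont.comp_continuous cont_e (fun θ => sphere_subset_closedBall (emem θ))
  have hΦEint : IntervalIntegrable (fun θ:ℝ => Φ (Complex.exp (θ*Complex.I)))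
      MeasureTheory.volume 0 (2*π) := hΦEcont.intervalIntegrable _ _
  set Q : ℝ → ℂ := fun θ => -(Φ (Complex.exp (θ*Complex.I)))
      - Φ (Complex.exp (θ*Complex.I)) / (Complex.exp (θ*Complex.I) - 1) with hQdef
  have hQint : IntervalIntegrable Q MeasureTheory.volume 0 (2*π) := hΦEint.neg.sub hPint
  have hconjQint : IntervalIntegrable (fun θ => (starRingEnd ℂ) (Q θ))
      MeasureTheory.volume 0 (2*π) := by
    rw [intervalIntegrable_iff] at hQint ⊢
    refine hQint.norm.mono' (Complex.continuous_conj.comp_aestronglyMeasurable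
      hQint.aestronglyMeasurable) ?_
    refine ae_of_all _ fun θ => ?_
    simp [RCLike.norm_conj]
  -- pointwise identity
  have hpoint : ∀ θ : ℝ,
      ((f (Complex.exp (θ * Complex.I)) * g (Complex.exp (θ * Complex.I))
        - f₀ (Complex.exp (θ * Complex.I)) * g₁ (Complex.exp (θ * Complex.I)) : ℝ) : ℂ) /
        (Complex.exp (θ * Complex.I) - 1)
      = (1/2:ℂ) * (Φ (Complex.exp (θ*Complex.I)) / (Complex.exp (θ*Complex.I) - 1))
        + (1/2:ℂ) * (starRingEnd ℂ) (Q θ) := by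
    intro θ
    have hσs := emem θ
    have hσne : Complex.exp (θ*Complex.I) ≠ 0 := Complex.exp_ne_zero _
    have hσn : ‖Complex.exp (θ*Complex.I)‖ = 1 :=
      mem_sphere_zero_iff_norm.1 hσs
    have hconjσ : (starRingEnd ℂ) (Complex.exp (θ*Complex.I))
        = (Complex.exp (θ*Complex.I))⁻¹ := (Complex.inv_eq_conj hσn).symm
    simp only [hQdef, hΦdef]
    rw [hFσ _ hσs, hGσ _ hσs]
    rcases eq_or_ne (Complex.exp (θ*Complex.I)) 1 with hE1 | hE1
    · rw [hE1] at hσn hconjσ ⊢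
      rw [hg1, hg₁1]
      simp
    · have hd : Complex.exp (θ*Complex.I) - 1 ≠ 0 := sub_ne_zero.2 hE1
      have hinv1 : (Complex.exp (θ*Complex.I))⁻¹ - 1 ≠ 0 := by
        rw [sub_ne_zero]
        intro hc
        exact hE1 (by rwa [inv_eq_one] at hc)
      exact circle_pt _ _ _ _ _ hσne hconjσ hd hinv1
  -- final computation
  calc (∫ θ in (0:ℝ)..(2 * π),
      ((f (Complex.exp (θ * Complex.I)) * g (Complex.exp (θ * Complex.I))
        - f₀ (Complex.exp (θ * Complex.I)) * g₁ (Complex.exp (θ * Complex.I)) : ℝ) : ℂ) /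
        (Complex.exp (θ * Complex.I) - 1))
      = ∫ θ in (0:ℝ)..(2*π),
        ((1/2:ℂ) * (Φ (Complex.exp (θ*Complex.I)) / (Complex.exp (θ*Complex.I) - 1))
          + (1/2:ℂ) * (starRingEnd ℂ) (Q θ)) :=
        intervalIntegral.integral_congr (fun θ _ => hpoint θ)
    _ = (1/2:ℂ) * (∫ θ in (0:ℝ)..(2*π),
          Φ (Complex.exp (θ*Complex.I)) / (Complex.exp (θ*Complex.I) - 1))
        + (1/2:ℂ) * ∫ θ in (0:ℝ)..(2*π), (starRingEnd ℂ) (Q θ) := by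
        rw [intervalIntegral.integral_add (hPint.const_mul _) (hconjQint.const_mul _),
          intervalIntegral.integral_const_mul, intervalIntegral.integral_const_mul]
    _ = 0 := by
        have hconj_pull : (∫ θ in (0:ℝ)..(2*π), (starRingEnd ℂ) (Q θ))
            = (starRingEnd ℂ) (∫ θ in (0:ℝ)..(2*π), Q θ) := by
          simp only [intervalIntegral]
          rw [integral_conj, integral_conj, ← map_sub]
        have hQval : (∫ θ in (0:ℝ)..(2*π), Q θ) = 0 := by
          have h2' : (∫ θ in (0:ℝ)..(2*π), Q θ)
              = ∫ θ in (0:ℝ)..(2*π), -(Φ (Complex.exp (θ*Complex.I))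
                  + Φ (Complex.exp (θ*Complex.I)) / (Complex.exp (θ*Complex.I) - 1)) :=
            intervalIntegral.integral_congr (fun θ _ => by simp only [hQdef]; ring)
          rw [h2', intervalIntegral.integral_neg,
            intervalIntegral.integral_add hΦEint hPint, hmean, hPval, add_zero, neg_zero]
        rw [hconj_pull, hQval, hPval, map_zero]
        simp
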